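/- If a virtual graph G has a bridge edge, then its S-polynomial is identically zero. -/

import Mathlib

open Polynomial

noncomputable section
open scoped Classical

/-- A ribbon graph (combinatorial map), given by a finite set of half-edges
together with a fixed-point-free involution `edgePair` (pairing the two half-edges
of each edge) and a rotation permutation `rot` whose cycles are the vertices with
their counterclockwise rotation system. -/
structure RibbonGraph where
  H : Type
  fintypeH : Fintype H
  decH : DecidableEq H
  edgePair : Equiv.Perm H
  rot : Equiv.Perm H
  edgePair_invol : ∀ h, edgePair (edgePair h) = h
  edgePair_nofix : ∀ h, edgePair h ≠ h

namespace RibbonGraph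

variable (G : RibbonGraph)

instance : Fintype G.H := G.fintypeH
instance : DecidableEq G.H := G.decH

/-- Edges are the orbits of the involution `edgePair`. -/
def edgeSetoid : Setoid G.H :=
  ⟨G.edgePair.SameCycle, ⟨fun _ => Equiv.Perm.SameCycle.refl _ _,
    fun h => h.symm, fun h h' => h.trans h'⟩⟩

def EdgeSet := Quotient G.edgeSetoid

instance : Finite G.EdgeSet := Quotient.finite _
instance : Fintype G.EdgeSet := Fintype.ofFinite _

def edgeOf (h : G.H) : G.EdgeSet := Quotient.mk G.edgeSetoid h

/-- Vertices are the orbits of the rotation `rot`. -/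
def vertexSetoid : Setoid G.H :=
  ⟨G.rot.SameCycle, ⟨fun _ => Equiv.Perm.SameCycle.refl _ _,
    fun h => h.symm, fun h h' => h.trans h'⟩⟩

def VertexSet := Quotient G.vertexSetoid

instance : Finite G.VertexSet := Quotient.finite _
instance : Fintype G.VertexSet := Fintype.ofFinite _

def vertexOf (h : G.H) : G.VertexSet := Quotient.mk G.vertexSetoid h

def numVertices : ℕ := Nat.card G.VertexSet
def numEdges : ℕ := Nat.card G.EdgeSet

/-- One step of the connectivity relation of `G − D` (`D` a set of deleted edges):
half-edges at a common vertex are connected, as are the two halves of a kept edge.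
Vertices all of whose half-edges are deleted remain as isolated components. -/
def connStep (D : Finset G.EdgeSet) (x y : G.H) : Prop :=
  G.rot.SameCycle x y ∨ (G.edgeOf x ∉ D ∧ y = G.edgePair x)

/-- `b₀(G − D)`: number of connected components of the deletion `G − D`. -/
def b0Del (D : Finset G.EdgeSet) : ℕ :=
  Nat.card (Quotient (Setoid.mk _ (Relation.EqvGen.is_equivalence (G.connStep D))))

def numEdgesDel (D : Finset G.EdgeSet) : ℕ := G.numEdges - D.card

/-- `b₁(G − D)`: the cycle rank `|E| − |V| + b₀` of the deletion. -/
def b1Del (D : Finset G.EdgeSet) : ℤ :=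
  (G.numEdgesDel D : ℤ) - (G.numVertices : ℤ) + (G.b0Del D : ℤ)

/-- One step of the face (boundary-walk) relation of `G − D`: from a kept half-edge `x`,
go to its partner and then rotate, skipping deleted half-edges. Its equivalence classes
through kept half-edges are the boundary components of `G − D`. -/
def faceStep (D : Finset G.EdgeSet) (x y : G.H) : Prop :=
  G.edgeOf x ∉ D ∧ G.edgeOf y ∉ D ∧
    ∃ m : ℕ, 0 < m ∧ y = (G.rot ^ m) (G.edgePair x) ∧
      ∀ j, 0 < j → j < m → G.edgeOf ((G.rot ^ j) (G.edgePair x)) ∈ D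

def faceSetoid (D : Finset G.EdgeSet) : Setoid G.H :=
  Setoid.mk _ (Relation.EqvGen.is_equivalence (G.faceStep D))

/-- The number of boundary components (faces) of the ribbon graph `G − D`:
face-classes of kept half-edges, plus one circle for each fully deleted vertex. -/
def facesDel (D : Finset G.EdgeSet) : ℕ :=
  Nat.card {c : Quotient (G.faceSetoid D) // ∃ h, G.edgeOf h ∉ D ∧ Quotient.mk (G.faceSetoid D) h = c}
    + Nat.card {v : G.VertexSet // ∀ h, G.vertexOf h = v → G.edgeOf h ∈ D}

/-- The genus of `G − D`, via the Euler characteristic relation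
`|V| − |E| + f = 2b₀ − 2g`, i.e. `2g = b₁ − f + b₀`. -/
def genusDel (D : Finset G.EdgeSet) : ℤ :=
  (G.b1Del D - (G.facesDel D : ℤ) + (G.b0Del D : ℤ)) / 2

/-- The `S`-polynomial state sum `S_G(Q) = Σ_{T⊆E} (−1)^{|T|} Q^{b₁(G−T) − g(G−T)}`. -/
def SPoly : Polynomial ℚ :=
  ∑ D : Finset G.EdgeSet, (-1 : Polynomial ℚ) ^ D.card * X ^ (G.b1Del D - G.genusDel D).toNat

/-- The flow polynomial state sum `F_G(Q) = Σ_{T⊆E} (−1)^{|T|} Q^{b₁(G−T)}`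
of the underlying graph. -/
def FPoly : Polynomial ℚ :=
  ∑ D : Finset G.EdgeSet, (-1 : Polynomial ℚ) ^ D.card * X ^ (G.b1Del D).toNat

/-- A bridge: an edge whose deletion increases the number of connected components. -/
def IsBridge (e : G.EdgeSet) : Prop := G.b0Del ∅ < G.b0Del {e}

/-- `e` is a coloop of the deletion `G − D`: the two boundary components of `G − D`
adjacent to (parallel to) the edge `e` coincide. -/
def IsColoopIn (D : Finset G.EdgeSet) (e : G.EdgeSet) : Prop :=
  e ∉ D ∧ ∃ a, G.edgeOf a = e ∧ Relation.EqvGen (G.faceStep D) a (G.edgePair a)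

/-- A coloop of `G`: the two boundary components adjacent to the edge coincide
(equivalently, the dual edge is a loop of the dual graph). -/
def IsColoop (e : G.EdgeSet) : Prop := G.IsColoopIn ∅ e

/-- Degree of the vertex containing the half-edge `h`: the length of its rotation cycle. -/
def vertexDegree (h : G.H) : ℕ := Nat.card {x : G.H // G.rot.SameCycle h x}

/-- Degree of a vertex: the number of half-edges incident to it. -/
def vDeg (v : G.VertexSet) : ℕ := Nat.card {h : G.H // G.vertexOf h = v}

end RibbonGraph


/-!
Let `e` be a bridge with half-edges `a` and `a'`. For every `D ∌ e`, the edge `e` is still a bridge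
of `G − D`, so deleting it raises `b₀` by one and leaves `b₁` unchanged. Moreover `a` and `a'` lie
on one boundary component of `G − D`, and deleting `e` splits that boundary component in two, so
the number of faces also grows by one and the genus is unchanged. Hence the states `D` and
`D ∪ {e}` contribute the same power of `Q` with opposite signs, and the state sum vanishes.

Faces are counted as the cycles of the boundary-walk permutation of `G − D`. Deleting `e`
multiplies it by transpositions, and multiplying a permutation by the transposition of two distinct
points of one cycle splits that cycle.
-/

namespace Setoid

variable {α : Type*} {s : Setoid α} {a b : α} {P : α → Prop}

/-- The finest setoid coarser than `s` in which `a` and `b` are related. -/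
def glue (s : Setoid α) (a b : α) : Setoid α where
  r x y := s x y ∨ (s x a ∧ s b y) ∨ (s x b ∧ s a y)
  iseqv := by
    refine ⟨fun x => Or.inl (s.refl x), ?_, ?_⟩
    · rintro x y (h | ⟨h₁, h₂⟩ | ⟨h₁, h₂⟩)
      exacts [Or.inl (s.symm h), Or.inr (Or.inr ⟨s.symm h₂, s.symm h₁⟩),
        Or.inr (Or.inl ⟨s.symm h₂, s.symm h₁⟩)]
    · rintro x y z (h | ⟨h₁, h₂⟩ | ⟨h₁, h₂⟩) (h' | ⟨h₁', h₂'⟩ | ⟨h₁', h₂'⟩)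
      exacts [Or.inl (s.trans h h'), Or.inr (Or.inl ⟨s.trans h h₁', h₂'⟩),
        Or.inr (Or.inr ⟨s.trans h h₁', h₂'⟩), Or.inr (Or.inl ⟨h₁, s.trans h₂ h'⟩),
        Or.inl (s.trans h₁ (s.trans (s.symm (s.trans h₂ h₁')) h₂')), Or.inl (s.trans h₁ h₂'),
        Or.inr (Or.inr ⟨h₁, s.trans h₂ h'⟩), Or.inl (s.trans h₁ h₂'),
        Or.inl (s.trans (s.trans h₁ (s.symm (s.trans h₂ h₁'))) h₂')]

theorem le_glue : s ≤ s.glue a b := fun _ _ h => Or.inl h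

theorem glue_rel : s.glue a b a b := Or.inr (Or.inl ⟨s.refl a, s.refl b⟩)

theorem glue_le {t : Setoid α} (hst : s ≤ t) (hab : t a b) : s.glue a b ≤ t := by
  rintro x y (h | ⟨h₁, h₂⟩ | ⟨h₁, h₂⟩)
  exacts [hst h, t.trans (t.trans (hst h₁) hab) (hst h₂),
    t.trans (t.trans (hst h₁) (t.symm hab)) (hst h₂)]

theorem glue_eq_self (hab : s a b) : s.glue a b = s :=
  le_antisymm (glue_le le_rfl hab) le_glue

theorem card_quotient_glue_add_one [Finite α] (hab : ¬ s a b) :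
    Nat.card (Quotient (s.glue a b)) + 1 = Nat.card (Quotient s) := by
  let π : {q : Quotient s // q ≠ ⟦b⟧} → Quotient (s.glue a b) :=
    fun q => Quotient.map' id (fun _ _ h => le_glue h) q.1
  have hπ : Function.Bijective π := by
    constructor
    · rintro ⟨q, hq⟩ ⟨q', hq'⟩ h
      induction q using Quotient.inductionOn
      induction q' using Quotient.inductionOn
      have hxb := fun h => hq (Quotient.sound h)
      have hyb := fun h => hq' (Quotient.sound h)
      rcases Quotient.exact h with h | ⟨-, h⟩ | ⟨h, -⟩
      exacts [Subtype.ext (Quotient.sound h), absurd (s.symm h) hyb, absurd h hxb]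
    · intro q
      induction q using Quotient.inductionOn with | h x => ?_
      by_cases hxb : s x b
      · exact ⟨⟨⟦a⟧, fun h => hab (Quotient.exact h)⟩,
          Quotient.sound (Or.inr (Or.inl ⟨s.refl a, s.symm hxb⟩))⟩
      · exact ⟨⟨⟦x⟧, fun h => hxb (Quotient.exact h)⟩, rfl⟩
  rw [← Nat.card_congr (Equiv.ofBijective π hπ)]
  change Nat.card ({⟦b⟧}ᶜ : Set (Quotient s)) + 1 = _
  rw [Nat.card_coe_set_eq, ← Set.ncard_univ, ← Set.ncard_sdiff_singleton_add_one (Set.mem_univ ⟦b⟧),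
    Set.compl_eq_univ_sdiff]

theorem card_quotient_eq_card_classes_add_card [Finite α] (s : Setoid α)
    (hs : ∀ x y, s x y → x = y ∨ (P x ∧ P y)) :
    Nat.card (Quotient s) =
      Nat.card {c : Quotient s // ∃ h, P h ∧ Quotient.mk s h = c} + Nat.card {x : α // ¬ P x} := by
  let e : {x : α // ¬ P x} → {c : Quotient s // ¬ ∃ h, P h ∧ Quotient.mk s h = c} :=
    fun x => ⟨Quotient.mk s x.1, fun ⟨h, hP, hmk⟩ => by
      rcases hs h x.1 (Quotient.exact hmk) with rfl | ⟨-, hPx⟩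
      exacts [x.2 hP, x.2 hPx]⟩
  have he : Function.Bijective e := by
    refine ⟨fun ⟨x, hx⟩ ⟨y, _⟩ hxy => ?_, fun ⟨c, hc⟩ => ?_⟩
    · rcases hs x y (Quotient.exact (congrArg Subtype.val hxy)) with rfl | ⟨hPx, -⟩
      exacts [rfl, absurd hPx hx]
    · induction c using Quotient.inductionOn with | h x => ?_
      exact ⟨⟨x, fun hP => hc ⟨x, hP, rfl⟩⟩, rfl⟩
  rw [← Nat.card_sum]
  exact Nat.card_congr ((Equiv.sumCompl _).symm.trans
    (Equiv.sumCongr (Equiv.refl _) (Equiv.ofBijective e he).symm))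

theorem card_classes_congr {s t : Setoid α} (hst : ∀ x y, P x → P y → (s x y ↔ t x y)) :
    Nat.card {c : Quotient s // ∃ h, P h ∧ Quotient.mk s h = c}
      = Nat.card {c : Quotient t // ∃ h, P h ∧ Quotient.mk t h = c} := by
  have hker : ∀ r : Setoid α, Nat.card {c : Quotient r // ∃ h, P h ∧ Quotient.mk r h = c}
      = Nat.card (Quotient (ker fun h : {h // P h} => Quotient.mk r h.1)) := fun r =>
    Nat.card_congr ((Equiv.subtypeEquivRight fun c => by simp [eq_comm]).trans
      (quotientKerEquivRange _).symm)
  have heq : (ker fun h : {h // P h} => Quotient.mk s h.1) = ker fun h => Quotient.mk t h.1 := by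
    ext ⟨x, hx⟩ ⟨y, hy⟩
    simp only [ker_def, Quotient.eq]
    exact hst x y hx hy
  rw [hker, hker, heq]

end Setoid

theorem Nat.card_subtype_or_eq {β : Type*} [Finite β] {P : β → Prop} {u : β} (hu : ¬ P u) :
    Nat.card {v // P v ∨ v = u} = Nat.card {v // P v} + 1 := by
  have hset : {v | P v ∨ v = u} = insert u {v | P v} := by
    ext v
    simp only [Set.mem_ofPred_eq, Set.mem_insert_iff, or_comm]
  change Set.ncard {v | P v ∨ v = u} = Set.ncard {v | P v} + 1
  rw [hset, Set.ncard_insert_of_notMem (s := {v | P v}) hu]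

theorem Nat.card_subtype_or_eq_and {β : Type*} [Finite β] {P : β → Prop} {u : β} (A : Prop)
    [Decidable A] (hu : ¬ P u) :
    Nat.card {v // P v ∨ (v = u ∧ A)} = Nat.card {v // P v} + if A then 1 else 0 := by
  by_cases hA : A
  · simpa only [hA, and_true, if_true] using Nat.card_subtype_or_eq hu
  · simp only [hA, and_false, or_false, if_false, add_zero]

namespace Equiv.Perm

variable {α : Type*} {f : Perm α} {p q : α → Prop} {c x y z : α} {m n : ℕ}

theorem pow_apply_mod (h : (f ^ n) z = z) (i : ℕ) : (f ^ (i % n)) z = (f ^ i) z :=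
  (show Function.IsPeriodicPt f n z from h).iterate_mod_apply i

theorem inv_pow_apply_pow_apply (h : m ≤ n) : (f⁻¹ ^ m) ((f ^ n) z) = (f ^ (n - m)) z := by
  obtain ⟨k, rfl⟩ := Nat.exists_eq_add_of_le h
  rw [pow_add, mul_apply, inv_pow, Nat.add_sub_cancel_left, inv_eq_iff_eq]

theorem pow_apply_pow_apply : (f ^ m) ((f ^ n) z) = (f ^ (m + n)) z := by
  rw [pow_add, mul_apply]

theorem SameCycle.rel_of_forall_rel_apply [Finite α] {r : α → α → Prop} (hr : ∀ x, r x x)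
    (ht : ∀ x y z, r x y → r y z → r x z) (hf : ∀ z, r z (f z)) (h : f.SameCycle x y) :
    r x y := by
  obtain ⟨n, -, rfl⟩ := h.exists_pow_eq'
  clear h
  induction n with
  | zero => exact hr x
  | succ n ih => exact ht _ _ _ ih (by rw [pow_succ', mul_apply]; exact hf _)

theorem SameCycle.setoid_le [Finite α] {s : Setoid α} (hf : ∀ z, s z (f z)) :
    SameCycle.setoid f ≤ s := fun _ _ =>
  SameCycle.rel_of_forall_rel_apply s.refl (fun _ _ _ => s.trans) hf

def IsFirstHit (p : α → Prop) (f : Perm α) (z : α) (m : ℕ) : Prop :=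
  0 < m ∧ p ((f ^ m) z) ∧ ∀ j, 0 < j → j < m → ¬ p ((f ^ j) z)

theorem exists_isFirstHit (h : ∃ m, 0 < m ∧ p ((f ^ m) z)) : ∃ m, IsFirstHit p f z m :=
  ⟨Nat.find h, (Nat.find_spec h).1, (Nat.find_spec h).2,
    fun _ hj hjm hp => Nat.find_min h hjm ⟨hj, hp⟩⟩

theorem exists_isFirstHit_of_sameCycle [Finite α] (h : f.SameCycle z y) (hy : p y) :
    ∃ m, IsFirstHit p f z m := by
  obtain ⟨i, -, rfl⟩ := h.exists_pow_eq'
  refine exists_isFirstHit ⟨i + orderOf f, Nat.add_pos_right _ (orderOf_pos f), ?_⟩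
  rwa [pow_add, pow_orderOf_eq_one, mul_one]

theorem IsFirstHit.unique (h : IsFirstHit p f z m) (h' : IsFirstHit p f z n) : m = n := by
  by_contra hne
  rcases Nat.lt_or_gt_of_ne hne with hlt | hlt
  exacts [h'.2.2 m h.1 hlt h.2.1, h.2.2 n h'.1 hlt h'.2.1]

/-- The first point after `z` on its `f`-cycle that satisfies `p` (or `z` if there is none). -/
def firstAfter (p : α → Prop) (f : Perm α) (z : α) : α :=
  if h : ∃ m, 0 < m ∧ p ((f ^ m) z) then (f ^ Nat.find h) z else z

theorem IsFirstHit.firstAfter_eq (h : IsFirstHit p f z m) : firstAfter p f z = (f ^ m) z := by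
  have hex : ∃ m, 0 < m ∧ p ((f ^ m) z) := ⟨m, h.1, h.2.1⟩
  rw [firstAfter, dif_pos hex, (IsFirstHit.unique ⟨(Nat.find_spec hex).1, (Nat.find_spec hex).2,
    fun _ hj hjm hp => Nat.find_min hex hjm ⟨hj, hp⟩⟩ h)]

theorem exists_isFirstHit_firstAfter [Finite α] (hz : p z) :
    ∃ m, IsFirstHit p f z m ∧ firstAfter p f z = (f ^ m) z :=
  let ⟨m, hm⟩ := exists_isFirstHit_of_sameCycle (SameCycle.refl f z) hz
  ⟨m, hm, hm.firstAfter_eq⟩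

theorem firstAfter_spec [Finite α] (hz : p z) : p (firstAfter p f z) := by
  obtain ⟨m, hm, heq⟩ := exists_isFirstHit_firstAfter (f := f) hz
  exact heq ▸ hm.2.1

theorem sameCycle_firstAfter : f.SameCycle z (firstAfter p f z) := by
  unfold firstAfter
  split_ifs
  exacts [sameCycle_pow_right.2 (SameCycle.refl f z), SameCycle.refl f z]

theorem firstAfter_inv_firstAfter [Finite α] (hz : p z) :
    firstAfter p f⁻¹ (firstAfter p f z) = z := by
  obtain ⟨m, hm, heq⟩ := exists_isFirstHit_firstAfter (f := f) hz
  have hback : IsFirstHit p f⁻¹ ((f ^ m) z) m := by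
    refine ⟨hm.1, by rwa [inv_pow_apply_pow_apply le_rfl, Nat.sub_self, pow_zero], ?_⟩
    intro j hj hjm
    rw [inv_pow_apply_pow_apply hjm.le]
    exact hm.2.2 _ (by omega) (by omega)
  rw [heq, hback.firstAfter_eq, inv_pow_apply_pow_apply le_rfl, Nat.sub_self, pow_zero, one_apply]

theorem firstAfter_eq_self_iff [Finite α] (hz : p z) :
    firstAfter p f z = z ↔ ∀ y, f.SameCycle z y → y ≠ z → ¬ p y := by
  obtain ⟨m, hm, heq⟩ := exists_isFirstHit_firstAfter (f := f) hz
  refine ⟨fun hfix y hzy hyz => ?_, fun h => by_contra fun hne => h _ sameCycle_firstAfter hne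
    (firstAfter_spec hz)⟩
  obtain ⟨i, -, rfl⟩ := hzy.exists_pow_eq'
  rw [← pow_apply_mod (heq ▸ hfix)] at hyz ⊢
  rcases (i % m).eq_zero_or_pos with h0 | hpos
  · exact absurd (by rw [h0, pow_zero, one_apply]) hyz
  · exact hm.2.2 _ hpos (Nat.mod_lt _ hm.1)

theorem firstAfter_eq_of_imp [Finite α] (hqp : ∀ x, q x → p x) (hz : p z)
    (hw : q (firstAfter p f z)) : firstAfter q f z = firstAfter p f z := by
  obtain ⟨m, hm, heq⟩ := exists_isFirstHit_firstAfter (f := f) hz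
  rw [heq] at hw ⊢
  exact IsFirstHit.firstAfter_eq ⟨hm.1, hw, fun j hj hjm hq => hm.2.2 j hj hjm (hqp _ hq)⟩

theorem firstAfter_firstAfter_of_imp [Finite α] (hqp : ∀ x, q x → p x) (hz : q z)
    (hw : ¬ q (firstAfter p f z)) : firstAfter q f (firstAfter p f z) = firstAfter q f z := by
  obtain ⟨m, hm, heq⟩ := exists_isFirstHit_firstAfter (f := f) (hqp z hz)
  obtain ⟨k, hk, hkeq⟩ := exists_isFirstHit_firstAfter (f := f) hz
  rw [heq] at hw ⊢
  have hmk : m < k := by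
    rcases lt_trichotomy k m with hlt | rfl | hlt
    exacts [absurd (hqp _ hk.2.1) (hm.2.2 k hk.1 hlt), absurd hk.2.1 hw, hlt]
  have hrest : IsFirstHit q f ((f ^ m) z) (k - m) := by
    refine ⟨by omega, by rw [pow_apply_pow_apply, Nat.sub_add_cancel hmk.le]; exact hk.2.1, ?_⟩
    intro j hj hjk
    rw [pow_apply_pow_apply]
    exact hk.2.2 _ (by omega) (by omega)
  rw [hrest.firstAfter_eq, hkeq, pow_apply_pow_apply, Nat.sub_add_cancel hmk.le]

section FirstReturn

variable [Finite α]

def firstReturn (p : α → Prop) (f : Perm α) : Perm α where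
  toFun z := if p z then firstAfter p f z else z
  invFun z := if p z then firstAfter p f⁻¹ z else z
  left_inv z := by
    by_cases hz : p z
    · simp only [hz, if_true, firstAfter_spec hz, firstAfter_inv_firstAfter hz]
    · simp only [hz, if_false]
  right_inv z := by
    by_cases hz : p z
    · have := firstAfter_inv_firstAfter (f := f⁻¹) hz
      rw [inv_inv] at this
      simp only [hz, if_true, firstAfter_spec hz, this]
    · simp only [hz, if_false]

theorem firstReturn_apply_of_pos (hz : p z) : firstReturn p f z = firstAfter p f z := if_pos hz

theorem firstReturn_apply_of_neg (hz : ¬ p z) : firstReturn p f z = z := if_neg hz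

theorem firstReturn_spec (hz : p z) : p (firstReturn p f z) := by
  rw [firstReturn_apply_of_pos hz]
  exact firstAfter_spec hz

theorem sameCycle_firstReturn : f.SameCycle z (firstReturn p f z) := by
  by_cases hz : p z
  · rw [firstReturn_apply_of_pos hz]
    exact sameCycle_firstAfter
  · rw [firstReturn_apply_of_neg hz]

theorem firstReturn_eq_self_iff (hz : p z) :
    firstReturn p f z = z ↔ ∀ y, f.SameCycle z y → y ≠ z → ¬ p y := by
  rw [firstReturn_apply_of_pos hz]
  exact firstAfter_eq_self_iff hz

/-- Removing `c` from the set on which the first return is taken cuts `c` out of its cycle. -/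
theorem firstReturn_and_ne [DecidableEq α] (hc : p c) :
    firstReturn (fun z => p z ∧ z ≠ c) f = swap c (firstReturn p f c) * firstReturn p f := by
  set g := firstReturn p f
  have hgc : p (g c) := firstReturn_spec hc
  ext z
  rw [mul_apply]
  by_cases hz : p z
  swap
  · rw [firstReturn_apply_of_neg (fun h => hz h.1), firstReturn_apply_of_neg hz,
      swap_apply_of_ne_of_ne (by rintro rfl; exact hz hc) (by rintro rfl; exact hz hgc)]
  rcases eq_or_ne z c with rfl | hzc
  · rw [firstReturn_apply_of_neg (fun h => h.2 rfl), swap_apply_right]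
  have hgz : g z = firstAfter p f z := firstReturn_apply_of_pos hz
  rw [firstReturn_apply_of_pos ⟨hz, hzc⟩]
  by_cases hw : g z = c
  · have hzc' : f.SameCycle z c := hw ▸ sameCycle_firstReturn
    have hcw : g c ≠ c := fun hfix => (firstReturn_eq_self_iff hc).1 hfix z hzc'.symm hzc hz
    rw [← firstAfter_firstAfter_of_imp (fun _ h => h.1) ⟨hz, hzc⟩ (fun h => h.2 (hgz ▸ hw)),
      ← hgz, hw, swap_apply_left, firstAfter_eq_of_imp (fun _ h => h.1) hc
        (by rw [← firstReturn_apply_of_pos hc]; exact ⟨hgc, hcw⟩), firstReturn_apply_of_pos hc]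
  · rw [firstAfter_eq_of_imp (fun _ h => h.1) hz (hgz ▸ ⟨firstReturn_spec hz, hw⟩), ← hgz,
      swap_apply_of_ne_of_ne hw (g.injective.ne hzc)]

end FirstReturn

section Swap

variable [DecidableEq α]

theorem swap_mul_pow_apply (hn : 0 < n)
    (h : ∀ i, 0 < i → i < n → (f ^ i) z ≠ x ∧ (f ^ i) z ≠ y) :
    ((swap x y * f) ^ n) z = swap x y ((f ^ n) z) := by
  induction n with
  | zero => exact absurd hn (lt_irrefl 0)
  | succ n ih =>
    rcases n.eq_zero_or_pos with rfl | hn'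
    · simp
    obtain ⟨hx, hy⟩ := h n hn' n.lt_succ_self
    rw [pow_succ', mul_apply, ih hn' fun i hi hin => h i hi (hin.trans n.lt_succ_self),
      swap_apply_of_ne_of_ne hx hy, mul_apply, pow_succ', mul_apply]

variable [Finite α]

theorem not_sameCycle_swap_mul (hxy : f.SameCycle x y) (hne : x ≠ y) :
    ¬ (swap x y * f).SameCycle x y := by
  obtain ⟨n, hn⟩ := exists_isFirstHit_of_sameCycle hxy (p := (· = y)) rfl
  obtain ⟨hn0, hny, hmin⟩ := hn
  have hfix : ∀ i, 0 < i → i < n → (f ^ i) x ≠ x := fun i hi hin hx => by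
    refine hmin (n - i) (by omega) (by omega) ?_
    rwa [← hx, pow_apply_pow_apply, Nat.sub_add_cancel hin.le]
  have hgi : ∀ i, 0 < i → i ≤ n → ((swap x y * f) ^ i) x = swap x y ((f ^ i) x) :=
    fun i hi hin => swap_mul_pow_apply hi fun j hj hji =>
      ⟨hfix j hj (by omega), hmin j hj (by omega)⟩
  have hgn : ((swap x y * f) ^ n) x = x := by rw [hgi n hn0 le_rfl, hny, swap_apply_right]
  intro hg
  obtain ⟨k, -, hk⟩ := hg.exists_pow_eq'
  rw [← pow_apply_mod hgn] at hk
  rcases (k % n).eq_zero_or_pos with h0 | hpos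
  · exact hne (by rwa [h0, pow_zero, one_apply] at hk)
  · have hlt := Nat.mod_lt k hn0
    rw [hgi _ hpos hlt.le, swap_apply_of_ne_of_ne (hfix _ hpos hlt) (hmin _ hpos hlt)] at hk
    exact hmin _ hpos hlt hk

theorem sameCycle_swap_mul (h : ¬ f.SameCycle x y) : (swap x y * f).SameCycle x y := by
  obtain ⟨n, hn0, hny, hmin⟩ :=
    exists_isFirstHit_of_sameCycle (SameCycle.refl f y) (p := (· = y)) rfl
  have hgn := swap_mul_pow_apply (x := x) hn0 fun i hi hin =>
    ⟨fun hx => h (hx ▸ sameCycle_pow_right.2 (SameCycle.refl f y)).symm, hmin i hi hin⟩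
  rw [hny, swap_apply_right] at hgn
  have hyx := (sameCycle_pow_right (n := n)).2 (SameCycle.refl (swap x y * f) y)
  rw [hgn] at hyx
  exact hyx.symm

/-- The number of cycles of a permutation, fixed points included. -/
def numCycles (f : Perm α) : ℕ := Nat.card (Quotient (SameCycle.setoid f))

theorem sameCycle_setoid_eq_glue (hxy : f.SameCycle x y) :
    SameCycle.setoid f = (SameCycle.setoid (swap x y * f)).glue x y := by
  have hle : SameCycle.setoid (swap x y * f) ≤ SameCycle.setoid f := by
    refine SameCycle.setoid_le fun z => ?_
    show f.SameCycle z (swap x y (f z))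
    rw [swap_apply_def]
    split_ifs with hx hy
    · exact (hx ▸ sameCycle_apply_right.2 (SameCycle.refl f z)).trans hxy
    · exact (hy ▸ sameCycle_apply_right.2 (SameCycle.refl f z)).trans hxy.symm
    · exact sameCycle_apply_right.2 (SameCycle.refl f z)
  refine le_antisymm (SameCycle.setoid_le fun z => ?_) (Setoid.glue_le hle hxy)
  have hgz : (swap x y * f).SameCycle z ((swap x y * f) z) :=
    sameCycle_apply_right.2 (SameCycle.refl _ z)
  have hfz : f z = swap x y ((swap x y * f) z) := by rw [mul_apply, swap_apply_self]
  rw [hfz, swap_apply_def]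
  split_ifs with hx hy
  · have hzx := hgz
    rw [hx] at hzx
    exact Or.inr (Or.inl ⟨hzx, SameCycle.refl _ y⟩)
  · have hzy := hgz
    rw [hy] at hzy
    exact Or.inr (Or.inr ⟨hzy, SameCycle.refl _ x⟩)
  · exact Or.inl hgz

theorem numCycles_swap_mul (hxy : f.SameCycle x y) (hne : x ≠ y) :
    numCycles (swap x y * f) = numCycles f + 1 := by
  rw [numCycles, numCycles, sameCycle_setoid_eq_glue hxy,
    Setoid.card_quotient_glue_add_one (not_sameCycle_swap_mul hxy hne)]

theorem numCycles_swap_apply_mul (f : Perm α) (c : α) :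
    numCycles (swap c (f c) * f) = numCycles f + if f c = c then 0 else 1 := by
  split_ifs with hc
  · rw [hc, swap_self, ← Perm.one_def, one_mul, add_zero]
  · exact numCycles_swap_mul (sameCycle_apply_right.2 (SameCycle.refl f c)) (Ne.symm hc)

end Swap

end Equiv.Perm

namespace RibbonGraph

open Equiv Equiv.Perm

variable {G : RibbonGraph} {D D₀ D' : Finset G.EdgeSet} {a x y : G.H}

theorem edgeOf_edgePair (x : G.H) : G.edgeOf (G.edgePair x) = G.edgeOf x :=
  Quotient.sound (sameCycle_apply_left.2 (SameCycle.refl _ x))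

theorem edgeOf_eq_edgeOf_iff : G.edgeOf x = G.edgeOf y ↔ x = y ∨ x = G.edgePair y := by
  refine ⟨fun h => ?_, by rintro (rfl | rfl); exacts [rfl, edgeOf_edgePair y]⟩
  obtain ⟨i, -, hi⟩ := (Quotient.exact h : G.edgePair.SameCycle x y).exists_pow_eq'
  have h2 : (G.edgePair ^ 2) x = x := by rw [sq, mul_apply, G.edgePair_invol]
  rw [← pow_apply_mod h2] at hi
  rcases Nat.mod_two_eq_zero_or_one i with h | h <;> rw [h] at hi
  · exact Or.inl (by simpa using hi)
  · exact Or.inr (by rw [← hi, pow_one, G.edgePair_invol])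

/-- The rotation system of `G − D`: around each vertex, skip the half-edges of deleted edges. -/
def rotDel (D : Finset G.EdgeSet) : Perm G.H := firstReturn (fun x => G.edgeOf x ∉ D) G.rot

def edgePairDel (D : Finset G.EdgeSet) : Perm G.H :=
  Function.Involutive.toPerm (fun x => if G.edgeOf x ∈ D then x else G.edgePair x) fun x => by
    by_cases hx : G.edgeOf x ∈ D
    · simp only [hx, if_true]
    · simp only [hx, if_false, edgeOf_edgePair, G.edgePair_invol]

/-- The boundary-walk permutation of `G − D`; half-edges of deleted edges are fixed points. -/
def facePerm (D : Finset G.EdgeSet) : Perm G.H := G.rotDel D * G.edgePairDel D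

theorem edgePairDel_apply : G.edgePairDel D x = if G.edgeOf x ∈ D then x else G.edgePair x := rfl

theorem rotDel_apply_of_mem (hx : G.edgeOf x ∈ D) : G.rotDel D x = x :=
  firstReturn_apply_of_neg (not_not.2 hx)

theorem rotDel_apply_of_not_mem (hx : G.edgeOf x ∉ D) :
    G.rotDel D x = firstAfter (fun x => G.edgeOf x ∉ D) G.rot x :=
  firstReturn_apply_of_pos (p := fun x => G.edgeOf x ∉ D) hx

theorem edgeOf_rotDel_not_mem (hx : G.edgeOf x ∉ D) : G.edgeOf (G.rotDel D x) ∉ D :=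
  firstReturn_spec (p := fun x => G.edgeOf x ∉ D) hx

theorem sameCycle_rotDel : G.rot.SameCycle x (G.rotDel D x) := sameCycle_firstReturn

theorem rotDel_eq_self_iff (hx : G.edgeOf x ∉ D) :
    G.rotDel D x = x ↔ ∀ y, G.rot.SameCycle x y → y ≠ x → G.edgeOf y ∈ D := by
  simp only [rotDel, firstReturn_eq_self_iff (p := fun x => G.edgeOf x ∉ D) hx, not_not]

theorem facePerm_apply_of_mem (hx : G.edgeOf x ∈ D) : G.facePerm D x = x := by
  rw [facePerm, mul_apply, edgePairDel_apply, if_pos hx, rotDel_apply_of_mem hx]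

theorem facePerm_apply_of_not_mem (hx : G.edgeOf x ∉ D) :
    G.facePerm D x = G.rotDel D (G.edgePair x) := by
  rw [facePerm, mul_apply, edgePairDel_apply, if_neg hx]

theorem facePerm_edgePair (hx : G.edgeOf x ∉ D) : G.facePerm D (G.edgePair x) = G.rotDel D x := by
  rw [facePerm_apply_of_not_mem (by rwa [edgeOf_edgePair]), G.edgePair_invol]

theorem edgeOf_facePerm_not_mem (hx : G.edgeOf x ∉ D) : G.edgeOf (G.facePerm D x) ∉ D := by
  rw [facePerm_apply_of_not_mem hx]
  exact edgeOf_rotDel_not_mem (by rwa [edgeOf_edgePair])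

theorem faceStep_iff : G.faceStep D x y ↔ G.edgeOf x ∉ D ∧ y = G.facePerm D x := by
  have hfirst : ∀ m, IsFirstHit (fun x => G.edgeOf x ∉ D) G.rot (G.edgePair x) m ↔
      0 < m ∧ G.edgeOf ((G.rot ^ m) (G.edgePair x)) ∉ D ∧
        ∀ j, 0 < j → j < m → G.edgeOf ((G.rot ^ j) (G.edgePair x)) ∈ D := fun m => by
    simp only [IsFirstHit, not_not]
  refine ⟨fun ⟨hx, hy, m, hm, hym, hmin⟩ => ⟨hx, ?_⟩, fun ⟨hx, hy⟩ => ?_⟩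
  · rw [facePerm_apply_of_not_mem hx, rotDel_apply_of_not_mem (by rwa [edgeOf_edgePair]),
      ((hfirst m).2 ⟨hm, hym ▸ hy, hmin⟩).firstAfter_eq, hym]
  · have hx' : G.edgeOf (G.edgePair x) ∉ D := by rwa [edgeOf_edgePair]
    obtain ⟨m, hm, heq⟩ :=
      exists_isFirstHit_firstAfter (p := fun x => G.edgeOf x ∉ D) (f := G.rot) hx'
    obtain ⟨hm0, hkept, hmin⟩ := (hfirst m).1 hm
    have hym : y = (G.rot ^ m) (G.edgePair x) := by
      rw [hy, facePerm_apply_of_not_mem hx, rotDel_apply_of_not_mem hx', heq]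
    exact ⟨hx, hym ▸ hkept, m, hm0, hym, hmin⟩

theorem numCycles_facePerm (D : Finset G.EdgeSet) :
    numCycles (G.facePerm D) =
      Nat.card {c : Quotient (G.faceSetoid D) //
        ∃ h, G.edgeOf h ∉ D ∧ Quotient.mk (G.faceSetoid D) h = c}
      + Nat.card {x : G.H // G.edgeOf x ∈ D} := by
  have hface : ∀ x y, G.edgeOf x ∉ D →
      (G.facePerm D).SameCycle x y → G.edgeOf y ∉ D ∧ G.faceSetoid D x y := fun x y hx h =>
    SameCycle.rel_of_forall_rel_apply
      (r := fun x y => G.edgeOf x ∉ D → G.edgeOf y ∉ D ∧ G.faceSetoid D x y)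
      (fun x hx => ⟨hx, (G.faceSetoid D).refl x⟩)
      (fun _ _ _ hxy hyz hx =>
        ⟨(hyz (hxy hx).1).1, (G.faceSetoid D).trans (hxy hx).2 (hyz (hxy hx).1).2⟩)
      (fun z hz =>
        ⟨edgeOf_facePerm_not_mem hz, Relation.EqvGen.rel _ _ (faceStep_iff.2 ⟨hz, rfl⟩)⟩)
      h hx
  have hle : G.faceSetoid D ≤ SameCycle.setoid (G.facePerm D) := Setoid.eqvGen_le fun x y h => by
    obtain ⟨-, rfl⟩ := faceStep_iff.1 h
    exact sameCycle_apply_right.2 (SameCycle.refl _ x)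
  rw [numCycles, Setoid.card_quotient_eq_card_classes_add_card (P := fun x => G.edgeOf x ∉ D) _
      fun x y hxy => ?_,
    Setoid.card_classes_congr fun x y hx _ => ⟨fun h => (hface x y hx h).2, @hle x y⟩]
  · simp only [not_not]
  · by_cases hx : G.edgeOf x ∈ D
    · exact Or.inl (hxy.eq_of_left (facePerm_apply_of_mem hx))
    · exact Or.inr ⟨hx, (hface x y hx hxy).1⟩

def connSetoid (D : Finset G.EdgeSet) : Setoid G.H := Relation.EqvGen.setoid (G.connStep D)

theorem connSetoid_of_sameCycle_rot (h : G.rot.SameCycle x y) : G.connSetoid D x y :=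
  Relation.EqvGen.rel _ _ (Or.inl h)

theorem connSetoid_edgePair (hx : G.edgeOf x ∉ D) : G.connSetoid D x (G.edgePair x) :=
  Relation.EqvGen.rel _ _ (Or.inr ⟨hx, rfl⟩)

theorem connSetoid_anti (h : D ⊆ D') : G.connSetoid D' ≤ G.connSetoid D :=
  Setoid.eqvGen_le fun x y => by
    rintro (hrot | ⟨hx, rfl⟩)
    exacts [connSetoid_of_sameCycle_rot hrot, connSetoid_edgePair fun hD => hx (h hD)]

theorem connSetoid_facePerm (hx : G.edgeOf x ∉ D₀) : G.connSetoid D₀ x (G.facePerm D x) := by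
  by_cases hxD : G.edgeOf x ∈ D
  · rw [facePerm_apply_of_mem hxD]
  · rw [facePerm_apply_of_not_mem hxD]
    exact (G.connSetoid D₀).trans (connSetoid_edgePair hx)
      (connSetoid_of_sameCycle_rot sameCycle_rotDel)

theorem mem_insert_edgeOf_iff :
    G.edgeOf x ∈ insert (G.edgeOf a) D ↔ (G.edgeOf x ∈ D ∨ x = a) ∨ x = G.edgePair a := by
  rw [Finset.mem_insert, edgeOf_eq_edgeOf_iff, or_comm, or_assoc]

theorem connSetoid_eq_glue (ha : G.edgeOf a ∉ D) :
    G.connSetoid D = (G.connSetoid (insert (G.edgeOf a) D)).glue a (G.edgePair a) := by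
  refine le_antisymm (Setoid.eqvGen_le fun x y => ?_)
    (Setoid.glue_le (connSetoid_anti (Finset.subset_insert _ _)) (connSetoid_edgePair ha))
  rintro (hrot | ⟨hx, rfl⟩)
  · exact Setoid.le_glue (connSetoid_of_sameCycle_rot hrot)
  by_cases hxa : x = a
  · exact hxa ▸ Setoid.glue_rel
  by_cases hxb : x = G.edgePair a
  · rw [hxb, G.edgePair_invol]
    exact (Setoid.glue _ _ _).symm Setoid.glue_rel
  · exact Setoid.le_glue (connSetoid_edgePair (by rw [mem_insert_edgeOf_iff]; tauto))

def IsBridgeIn (D : Finset G.EdgeSet) (a : G.H) : Prop :=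
  ¬ G.connSetoid (insert (G.edgeOf a) D) a (G.edgePair a)

theorem b0Del_insert (ha : G.edgeOf a ∉ D) (hbr : G.IsBridgeIn D a) :
    G.b0Del (insert (G.edgeOf a) D) = G.b0Del D + 1 := by
  change Nat.card (Quotient (G.connSetoid _)) = Nat.card (Quotient (G.connSetoid D)) + 1
  rw [connSetoid_eq_glue ha]
  exact (Setoid.card_quotient_glue_add_one hbr).symm

theorem IsBridgeIn.not_sameCycle_rot (h : G.IsBridgeIn D a) : ¬ G.rot.SameCycle a (G.edgePair a) :=
  fun hrot => h (connSetoid_of_sameCycle_rot hrot)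

theorem IsBridge.isBridgeIn (he : G.IsBridge (G.edgeOf a)) (D : Finset G.EdgeSet) :
    G.IsBridgeIn D a := by
  intro hconn
  have hglue := connSetoid_eq_glue (G := G) (D := ∅) (a := a) (Finset.notMem_empty _)
  rw [Finset.insert_empty, Setoid.glue_eq_self (connSetoid_anti (Finset.singleton_subset_iff.2
    (Finset.mem_insert_self _ D)) hconn)] at hglue
  change Nat.card (Quotient (G.connSetoid ∅)) < Nat.card (Quotient (G.connSetoid _)) at he
  rw [hglue] at he
  exact lt_irrefl _ he

/-- The two outer transpositions cut `a` and `edgePair a` out of their rotation cycles, the inner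
one removes the edge from the edge involution; this needs `a` and `edgePair a` at distinct
vertices. -/
theorem facePerm_insert (ha : G.edgeOf a ∉ D) (hloop : ¬ G.rot.SameCycle a (G.edgePair a)) :
    G.facePerm (insert (G.edgeOf a) D) = swap (G.edgePair a) (G.rotDel D (G.edgePair a)) *
      (swap a (G.rotDel D a) * (G.facePerm D * swap a (G.edgePair a))) := by
  set b := G.edgePair a with hb_def
  set ρ := G.rotDel D
  have hb : G.edgeOf b ∉ D := by rwa [edgeOf_edgePair]
  have hab : a ≠ b := (G.edgePair_nofix a).symm
  have hkept : (fun x => G.edgeOf x ∉ insert (G.edgeOf a) D) =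
      fun x => (G.edgeOf x ∉ D ∧ x ≠ a) ∧ x ≠ b := by
    ext x
    rw [mem_insert_edgeOf_iff]
    tauto
  have hρb : (swap a (ρ a) * ρ) b = ρ b := by
    rw [mul_apply, swap_apply_of_ne_of_ne (fun h => hloop (h ▸ sameCycle_rotDel).symm)
      (ρ.injective.ne hab.symm)]
  have hrot : G.rotDel (insert (G.edgeOf a) D) = swap b (ρ b) * (swap a (ρ a) * ρ) := by
    rw [rotDel, hkept, firstReturn_and_ne ⟨hb, hab.symm⟩,
      firstReturn_and_ne (p := fun x => G.edgeOf x ∉ D) ha]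
    change swap b ((swap a (ρ a) * ρ) b) * (swap a (ρ a) * ρ) = _
    rw [hρb]
  have hpair : G.edgePairDel (insert (G.edgeOf a) D) = G.edgePairDel D * swap a b := by
    ext x
    simp only [mul_apply, edgePairDel_apply, mem_insert_edgeOf_iff, ← hb_def]
    by_cases hxa : x = a
    · simp only [hxa, swap_apply_left, true_or, or_true, if_true, hb, if_false, b, G.edgePair_invol]
    by_cases hxb : x = b
    · simp only [hxb, swap_apply_right, or_true, if_true, ha, if_false]
      rfl
    · simp only [hxa, hxb, or_false, swap_apply_of_ne_of_ne hxa hxb]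
  rw [facePerm, facePerm, hrot, hpair]
  simp only [mul_assoc]
  rfl

/-- Every step of `facePerm D * swap a (edgePair a)` stays in a component of `G − (D ∪ {e})`, so
that permutation separates `a` from `edgePair a`; multiplying back by the transposition merges
their cycles. -/
theorem IsBridgeIn.sameCycle_facePerm (ha : G.edgeOf a ∉ D) (hbr : G.IsBridgeIn D a) :
    (G.facePerm D).SameCycle a (G.edgePair a) := by
  set b := G.edgePair a
  set φ := G.facePerm D
  have hφb : φ b = G.rotDel D a := facePerm_edgePair ha
  have hφa : φ a = G.rotDel D b := facePerm_apply_of_not_mem ha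
  have hstep : ∀ z, G.connSetoid (insert (G.edgeOf a) D) z ((φ * swap a b) z) := by
    intro z
    rw [mul_apply, swap_apply_def]
    split_ifs with hza hzb
    · rw [hza, hφb]
      exact connSetoid_of_sameCycle_rot sameCycle_rotDel
    · rw [hzb, hφa]
      exact connSetoid_of_sameCycle_rot sameCycle_rotDel
    · by_cases hz : G.edgeOf z ∈ D
      · rw [facePerm_apply_of_mem hz]
      · exact connSetoid_facePerm (by rw [mem_insert_edgeOf_iff]; tauto)
  have hsplit : ¬ (φ * swap a b).SameCycle a b := fun h => hbr (SameCycle.setoid_le hstep h)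
  have hmerge := sameCycle_swap_mul (x := (φ * swap a b) a) (y := (φ * swap a b) b)
    (by rwa [sameCycle_apply_left, sameCycle_apply_right])
  rw [← mul_swap_eq_swap_mul, mul_swap_mul_self, mul_apply, mul_apply, swap_apply_left,
    swap_apply_right, sameCycle_apply_left, sameCycle_apply_right] at hmerge
  exact hmerge.symm

theorem numCycles_facePerm_insert (ha : G.edgeOf a ∉ D) (hbr : G.IsBridgeIn D a) :
    numCycles (G.facePerm (insert (G.edgeOf a) D)) = numCycles (G.facePerm D) + 1 +
      (if G.rotDel D a = a then 0 else 1) +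
      (if G.rotDel D (G.edgePair a) = G.edgePair a then 0 else 1) := by
  set b := G.edgePair a
  set φ := G.facePerm D
  set ρ := G.rotDel D
  have hψa : (φ * swap a b) a = ρ a := by
    rw [mul_apply, swap_apply_left]
    exact facePerm_edgePair ha
  have hψb : (φ * swap a b) b = ρ b := by
    rw [mul_apply, swap_apply_right]
    exact facePerm_apply_of_not_mem ha
  have hψ₁b : (swap a (ρ a) * (φ * swap a b)) b = ρ b := by
    rw [mul_apply, hψb, swap_apply_of_ne_of_ne
      (fun h => hbr.not_sameCycle_rot (h ▸ sameCycle_rotDel).symm)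
      (ρ.injective.ne (G.edgePair_nofix a))]
  have hψ : numCycles (φ * swap a b) = numCycles φ + 1 := by
    have hsame : φ.SameCycle (φ a) (φ b) := by
      rw [sameCycle_apply_left, sameCycle_apply_right]
      exact hbr.sameCycle_facePerm ha
    rw [mul_swap_eq_swap_mul]
    exact numCycles_swap_mul hsame (φ.injective.ne (G.edgePair_nofix a).symm)
  rw [facePerm_insert ha hbr.not_sameCycle_rot, ← hψ₁b, numCycles_swap_apply_mul, hψ₁b, ← hψa,
    numCycles_swap_apply_mul, hψa, hψ]

theorem vertexOf_eq_vertexOf_iff {y : G.H} : G.vertexOf y = G.vertexOf x ↔ G.rot.SameCycle x y :=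
  Quotient.eq.trans ⟨SameCycle.symm, SameCycle.symm⟩

theorem isolated_vertexOf_insert_iff (hx : G.edgeOf x ∉ D)
    (hloop : ¬ G.rot.SameCycle x (G.edgePair x)) :
    (∀ h, G.vertexOf h = G.vertexOf x → G.edgeOf h ∈ insert (G.edgeOf x) D) ↔
      G.rotDel D x = x := by
  simp only [rotDel_eq_self_iff hx, vertexOf_eq_vertexOf_iff]
  refine ⟨fun hall y hy hyx => ?_, fun hall y hy => ?_⟩
  · rcases Finset.mem_insert.1 (hall y hy) with he | hD
    · rcases edgeOf_eq_edgeOf_iff.1 he with rfl | rfl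
      exacts [absurd rfl hyx, absurd hy hloop]
    · exact hD
  · by_cases hyx : y = x
    · exact hyx ▸ Finset.mem_insert_self _ _
    · exact Finset.mem_insert_of_mem (hall y hy hyx)

theorem isolated_insert_iff (ha : G.edgeOf a ∉ D)
    (hloop : ¬ G.rot.SameCycle a (G.edgePair a)) (v : G.VertexSet) :
    (∀ h, G.vertexOf h = v → G.edgeOf h ∈ insert (G.edgeOf a) D) ↔
      ((∀ h, G.vertexOf h = v → G.edgeOf h ∈ D) ∨ (v = G.vertexOf a ∧ G.rotDel D a = a)) ∨
        (v = G.vertexOf (G.edgePair a) ∧ G.rotDel D (G.edgePair a) = G.edgePair a) := by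
  have hb : G.edgeOf (G.edgePair a) ∉ D := by rwa [edgeOf_edgePair]
  have hloop' : ¬ G.rot.SameCycle (G.edgePair a) (G.edgePair (G.edgePair a)) := by
    rw [G.edgePair_invol]
    exact fun h => hloop h.symm
  have hins : insert (G.edgeOf (G.edgePair a)) D = insert (G.edgeOf a) D := by
    rw [edgeOf_edgePair]
  refine ⟨fun hall => ?_, ?_⟩
  · by_cases hdead : ∀ h, G.vertexOf h = v → G.edgeOf h ∈ D
    · exact Or.inl (Or.inl hdead)
    push Not at hdead
    obtain ⟨h₀, rfl, hh₀⟩ := hdead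
    rcases mem_insert_edgeOf_iff.1 (hall h₀ rfl) with (hD | rfl) | rfl
    · exact absurd hD hh₀
    · exact Or.inl (Or.inr ⟨rfl, (isolated_vertexOf_insert_iff ha hloop).1 hall⟩)
    · exact Or.inr ⟨rfl, (isolated_vertexOf_insert_iff hb hloop').1 (hins ▸ hall)⟩
  · rintro ((hdead | ⟨rfl, hfix⟩) | ⟨rfl, hfix⟩)
    · exact fun h hv => Finset.mem_insert_of_mem (hdead h hv)
    · exact (isolated_vertexOf_insert_iff ha hloop).2 hfix
    · exact hins ▸ (isolated_vertexOf_insert_iff hb hloop').2 hfix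

theorem card_isolated_insert (ha : G.edgeOf a ∉ D) (hloop : ¬ G.rot.SameCycle a (G.edgePair a)) :
    Nat.card {v : G.VertexSet // ∀ h, G.vertexOf h = v → G.edgeOf h ∈ insert (G.edgeOf a) D} =
      Nat.card {v : G.VertexSet // ∀ h, G.vertexOf h = v → G.edgeOf h ∈ D} +
        (if G.rotDel D a = a then 1 else 0) +
        (if G.rotDel D (G.edgePair a) = G.edgePair a then 1 else 0) := by
  have hb : ¬ ((∀ h, G.vertexOf h = G.vertexOf (G.edgePair a) → G.edgeOf h ∈ D) ∨
      (G.vertexOf (G.edgePair a) = G.vertexOf a ∧ G.rotDel D a = a)) := by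
    rintro (h | ⟨h, -⟩)
    exacts [(show G.edgeOf (G.edgePair a) ∉ D by rwa [edgeOf_edgePair]) (h _ rfl),
      hloop (vertexOf_eq_vertexOf_iff.1 h)]
  rw [Nat.card_congr (Equiv.subtypeEquivRight (isolated_insert_iff ha hloop)),
    Nat.card_subtype_or_eq_and (P := fun v => (∀ h, G.vertexOf h = v → G.edgeOf h ∈ D) ∨
      (v = G.vertexOf a ∧ G.rotDel D a = a)) _ hb,
    Nat.card_subtype_or_eq_and (P := fun v => ∀ h, G.vertexOf h = v → G.edgeOf h ∈ D) _
      fun h => ha (h _ rfl)]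

theorem card_mem_insert (ha : G.edgeOf a ∉ D) :
    Nat.card {x : G.H // G.edgeOf x ∈ insert (G.edgeOf a) D} =
      Nat.card {x : G.H // G.edgeOf x ∈ D} + 2 := by
  have hb : ¬ (G.edgeOf (G.edgePair a) ∈ D ∨ G.edgePair a = a) := by
    rw [edgeOf_edgePair]
    exact not_or.2 ⟨ha, G.edgePair_nofix a⟩
  rw [Nat.card_congr (Equiv.subtypeEquivRight fun x => mem_insert_edgeOf_iff),
    Nat.card_subtype_or_eq (P := fun x => G.edgeOf x ∈ D ∨ x = a) hb,
    Nat.card_subtype_or_eq (P := fun x => G.edgeOf x ∈ D) ha]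

theorem facesDel_insert (ha : G.edgeOf a ∉ D) (hbr : G.IsBridgeIn D a) :
    G.facesDel (insert (G.edgeOf a) D) = G.facesDel D + 1 := by
  have hcyc := numCycles_facePerm_insert ha hbr
  have hiso := card_isolated_insert ha hbr.not_sameCycle_rot
  rw [numCycles_facePerm, numCycles_facePerm, card_mem_insert ha] at hcyc
  unfold facesDel
  split_ifs at hcyc hiso <;> omega

theorem b1Del_insert (ha : G.edgeOf a ∉ D) (hbr : G.IsBridgeIn D a) :
    G.b1Del (insert (G.edgeOf a) D) = G.b1Del D := by
  have hcard : (insert (G.edgeOf a) D).card = D.card + 1 := Finset.card_insert_of_notMem ha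
  have hle : (insert (G.edgeOf a) D).card ≤ G.numEdges := by
    rw [numEdges, Nat.card_eq_fintype_card]
    exact Finset.card_le_univ _
  unfold b1Del numEdgesDel
  rw [b0Del_insert ha hbr, hcard]
  omega

theorem genusDel_insert (ha : G.edgeOf a ∉ D) (hbr : G.IsBridgeIn D a) :
    G.genusDel (insert (G.edgeOf a) D) = G.genusDel D := by
  unfold genusDel
  rw [b1Del_insert ha hbr, facesDel_insert ha hbr, b0Del_insert ha hbr]
  push_cast
  ring_nf

end RibbonGraph

/-- If a virtual graph `G` has a bridge edge, then its `S`-polynomial is identically zero. -/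
theorem stmt3 (G : RibbonGraph) (e : G.EdgeSet) (he : G.IsBridge e) :
    G.SPoly = 0 := by
  obtain ⟨a, rfl⟩ := Quotient.exists_rep e
  set e := G.edgeOf a
  have hpair : ∀ D ∈ (Finset.univ.erase e).powerset,
      (-1 : Polynomial ℚ) ^ D.card * X ^ (G.b1Del D - G.genusDel D).toNat +
        (-1) ^ (insert e D).card *
          X ^ (G.b1Del (insert e D) - G.genusDel (insert e D)).toNat = 0 := by
    intro D hD
    have ha : e ∉ D := fun h => Finset.notMem_erase e _ (Finset.mem_powerset.1 hD h)
    rw [RibbonGraph.b1Del_insert ha (he.isBridgeIn D),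
      RibbonGraph.genusDel_insert ha (he.isBridgeIn D), Finset.card_insert_of_notMem ha, pow_succ]
    ring
  rw [RibbonGraph.SPoly, ← Finset.powerset_univ, ← Finset.insert_erase (Finset.mem_univ e),
    Finset.sum_powerset_insert (Finset.notMem_erase e _), ← Finset.sum_add_distrib]
  exact Finset.sum_eq_zero hpair
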